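/- Let V = {I, A, B} be a set of three 2×2 diagonal unitary matrices. Then the diversity sum ΣV = min over distinct pairs X, Y ∈ V of (1/(2√2))‖X − Y‖_F is at most √3/2, and this bound is attained by A = diag(e^{2πi/3}, e^{−2πi/3}), B = diag(e^{4πi/3}, e^{−4πi/3}). -/

import Mathlib

/-! For unit vectors `x, y, z` of a real inner product space,
`‖x - y‖² + ‖x - z‖² + ‖y - z‖² + ‖x + y + z‖² = 3 (‖x‖² + ‖y‖² + ‖z‖²) = 9`, so the three
squared distances sum to at most `9`. Applying this to both diagonal coordinates of `1, A, B`,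
the three squared Frobenius distances sum to at most `18`; one of them is at most `6`, and the
corresponding normalized distance is at most `√(6/8) = √3/2`. For the cube roots of unity every
squared entry distance equals `3` (parallelogram law, with `‖1 + ζ‖ = ‖ζ²‖ = 1`), so all three
distances equal `√3/2`. -/

open Matrix

/-- The Frobenius norm of a complex matrix: `‖A‖_F = √(∑ᵢⱼ |aᵢⱼ|²)`. -/
noncomputable def frobNorm {M : ℕ} (A : Matrix (Fin M) (Fin M) ℂ) : ℝ :=
  Real.sqrt (∑ i, ∑ j, ‖A i j‖ ^ 2)

/-- The pairwise diversity-sum distance `(1/(2√2))‖X − Y‖_F` for `2 × 2`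
matrices. -/
noncomputable def dsum (X Y : Matrix (Fin 2) (Fin 2) ℂ) : ℝ :=
  (1 / (2 * Real.sqrt 2)) * frobNorm (X - Y)

section InnerProductSpace

variable {F : Type*} [NormedAddCommGroup F] [InnerProductSpace ℝ F]

theorem norm_sub_sq_add_norm_sub_sq_add_norm_sub_sq_add_norm_add_add_sq (x y z : F) :
    ‖x - y‖ ^ 2 + ‖x - z‖ ^ 2 + ‖y - z‖ ^ 2 + ‖x + y + z‖ ^ 2 =
      3 * (‖x‖ ^ 2 + ‖y‖ ^ 2 + ‖z‖ ^ 2) := by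
  simp only [norm_sub_sq_real, norm_add_sq_real, inner_add_left]
  ring

theorem norm_sub_sq_add_norm_sub_sq_add_norm_sub_sq_le_nine {x y z : F}
    (hx : ‖x‖ = 1) (hy : ‖y‖ = 1) (hz : ‖z‖ = 1) :
    ‖x - y‖ ^ 2 + ‖x - z‖ ^ 2 + ‖y - z‖ ^ 2 ≤ 9 := by
  have := norm_sub_sq_add_norm_sub_sq_add_norm_sub_sq_add_norm_add_add_sq x y z
  rw [hx, hy, hz] at this
  nlinarith [sq_nonneg ‖x + y + z‖]

end InnerProductSpace

theorem IsPrimitiveRoot.norm_one_sub_sq_eq_three {ζ : ℂ} (hζ : IsPrimitiveRoot ζ 3) :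
    ‖1 - ζ‖ ^ 2 = 3 := by
  have hnorm : ‖ζ‖ = 1 := hζ.norm'_eq_one (by norm_num)
  have hsum : 1 + ζ + ζ ^ 2 = 0 := by
    simpa [Finset.sum_range_succ] using hζ.geom_sum_eq_zero (by norm_num)
  have hadd : ‖1 + ζ‖ = 1 := by
    rw [show 1 + ζ = -ζ ^ 2 by linear_combination hsum, norm_neg, norm_pow, hnorm, one_pow]
  have := parallelogram_law_with_norm ℝ (1 : ℂ) ζ
  rw [hadd, hnorm, norm_one] at this
  linarith

theorem IsPrimitiveRoot.norm_sub_sq_sq_eq_three {ζ : ℂ} (hζ : IsPrimitiveRoot ζ 3) :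
    ‖ζ - ζ ^ 2‖ ^ 2 = 3 := by
  rw [show ζ - ζ ^ 2 = ζ * (1 - ζ) by ring, norm_mul, hζ.norm'_eq_one (by norm_num), one_mul,
    hζ.norm_one_sub_sq_eq_three]

theorem frobNorm_diagonal {M : ℕ} (d : Fin M → ℂ) :
    frobNorm (diagonal d) = Real.sqrt (∑ i, ‖d i‖ ^ 2) := by
  simp [frobNorm, diagonal_apply, apply_ite]

theorem norm_eq_one_of_conjTranspose_diagonal_mul_diagonal {n 𝕜 : Type*} [Fintype n]
    [DecidableEq n] [RCLike 𝕜] {d : n → 𝕜} (hd : (diagonal d)ᴴ * diagonal d = 1) (i : n) :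
    ‖d i‖ = 1 := by
  rw [diagonal_conjTranspose, diagonal_mul_diagonal, ← diagonal_one] at hd
  have := congrFun (diagonal_injective hd) i
  simp only [Pi.star_apply, RCLike.star_def, RCLike.conj_mul] at this
  exact (pow_eq_one_iff_of_nonneg (norm_nonneg _) two_ne_zero).mp (by exact_mod_cast this)

theorem dsum_diagonal (a b : Fin 2 → ℂ) :
    dsum (diagonal a) (diagonal b) =
      Real.sqrt ((‖a 0 - b 0‖ ^ 2 + ‖a 1 - b 1‖ ^ 2) / 8) := by
  rw [dsum, diagonal_sub, frobNorm_diagonal, Fin.sum_univ_two]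
  have hsqrt8 : Real.sqrt 8 = 2 * Real.sqrt 2 := by
    rw [show (8 : ℝ) = 2 ^ 2 * 2 by norm_num, Real.sqrt_mul (by positivity),
      Real.sqrt_sq zero_le_two]
  rw [Real.sqrt_div' _ (by norm_num), hsqrt8]
  ring

theorem sqrt_three_div_two_eq_sqrt : Real.sqrt 3 / 2 = Real.sqrt (6 / 8) := by
  rw [show (6 / 8 : ℝ) = 3 / 2 ^ 2 by norm_num, Real.sqrt_div' _ (by positivity),
    Real.sqrt_sq zero_le_two]

theorem dsum_diagonal_le_sqrt_three_div_two_iff (a b : Fin 2 → ℂ) :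
    dsum (diagonal a) (diagonal b) ≤ Real.sqrt 3 / 2 ↔
      ‖a 0 - b 0‖ ^ 2 + ‖a 1 - b 1‖ ^ 2 ≤ 6 := by
  rw [dsum_diagonal, sqrt_three_div_two_eq_sqrt, Real.sqrt_le_sqrt_iff (by norm_num),
    div_le_div_iff_of_pos_right (by norm_num)]

theorem min_dsum_diagonal_cube_roots {ζ ξ : ℂ} (hζ : IsPrimitiveRoot ζ 3)
    (hξ : IsPrimitiveRoot ξ 3) :
    min (min (dsum 1 (diagonal ![ζ, ξ])) (dsum 1 (diagonal ![ζ ^ 2, ξ ^ 2])))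
      (dsum (diagonal ![ζ, ξ]) (diagonal ![ζ ^ 2, ξ ^ 2])) = Real.sqrt 3 / 2 := by
  have hζ' := hζ.pow_of_coprime 2 (by norm_num)
  have hξ' := hξ.pow_of_coprime 2 (by norm_num)
  simp only [← diagonal_one, dsum_diagonal, cons_val_zero, cons_val_one,
    hζ.norm_one_sub_sq_eq_three, hξ.norm_one_sub_sq_eq_three, hζ'.norm_one_sub_sq_eq_three,
    hξ'.norm_one_sub_sq_eq_three, hζ.norm_sub_sq_sq_eq_three, hξ.norm_sub_sq_sq_eq_three]
  rw [min_self, min_self, sqrt_three_div_two_eq_sqrt]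
  norm_num

/-- **Diversity sum bound for diagonal `2 × 2` unitary constellations of three
elements.**  For any diagonal unitary `A, B` with `1, A, B` pairwise distinct,
the diversity sum of `{1, A, B}` is at most `√3/2`, and this bound is attained
by `A = diag(e^{2πi/3}, e^{−2πi/3})`, `B = diag(e^{4πi/3}, e^{−4πi/3})`. -/
theorem diag_three_element_dsum_bound :
    (∀ A B : Matrix (Fin 2) (Fin 2) ℂ,
      (∀ i j, i ≠ j → A i j = 0) → Aᴴ * A = 1 →
      (∀ i j, i ≠ j → B i j = 0) → Bᴴ * B = 1 →
      A ≠ 1 → B ≠ 1 → A ≠ B →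
      min (min (dsum 1 A) (dsum 1 B)) (dsum A B) ≤ Real.sqrt 3 / 2) ∧
    (let A₀ : Matrix (Fin 2) (Fin 2) ℂ :=
        Matrix.diagonal ![Complex.exp (2 * Real.pi * Complex.I / 3),
          Complex.exp (-(2 * Real.pi * Complex.I) / 3)]
     let B₀ : Matrix (Fin 2) (Fin 2) ℂ :=
        Matrix.diagonal ![Complex.exp (4 * Real.pi * Complex.I / 3),
          Complex.exp (-(4 * Real.pi * Complex.I) / 3)]
     min (min (dsum 1 A₀) (dsum 1 B₀)) (dsum A₀ B₀) = Real.sqrt 3 / 2) := by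
  constructor
  · intro A B hA hAu hB hBu _ _ _
    obtain ⟨a, rfl⟩ : ∃ a, A = diagonal a := ⟨_, (IsDiag.diagonal_diag hA).symm⟩
    obtain ⟨b, rfl⟩ : ∃ b, B = diagonal b := ⟨_, (IsDiag.diagonal_diag hB).symm⟩
    have ha := norm_eq_one_of_conjTranspose_diagonal_mul_diagonal hAu
    have hb := norm_eq_one_of_conjTranspose_diagonal_mul_diagonal hBu
    have h0 := norm_sub_sq_add_norm_sub_sq_add_norm_sub_sq_le_nine norm_one (ha 0) (hb 0)
    have h1 := norm_sub_sq_add_norm_sub_sq_add_norm_sub_sq_le_nine norm_one (ha 1) (hb 1)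
    rw [← diagonal_one, min_le_iff, min_le_iff, dsum_diagonal_le_sqrt_three_div_two_iff,
      dsum_diagonal_le_sqrt_three_div_two_iff, dsum_diagonal_le_sqrt_three_div_two_iff]
    by_contra! h
    linarith
  · intro A₀ B₀
    have hζ : IsPrimitiveRoot (Complex.exp (2 * Real.pi * Complex.I / 3)) 3 := by
      simpa using Complex.isPrimitiveRoot_exp 3 (by norm_num)
    have hξ : IsPrimitiveRoot (Complex.exp (-(2 * Real.pi * Complex.I) / 3)) 3 := by
      rw [neg_div, Complex.exp_neg]
      exact hζ.inv
    have hζ2 : Complex.exp (4 * Real.pi * Complex.I / 3) =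
        Complex.exp (2 * Real.pi * Complex.I / 3) ^ 2 := by
      rw [← Complex.exp_nat_mul]
      ring_nf
    have hξ2 : Complex.exp (-(4 * Real.pi * Complex.I) / 3) =
        Complex.exp (-(2 * Real.pi * Complex.I) / 3) ^ 2 := by
      rw [← Complex.exp_nat_mul]
      ring_nf
    simpa only [A₀, B₀, hζ2, hξ2] using min_dsum_diagonal_cube_roots hζ hξ
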